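/- For all a, b ≥ 1 and every N, the following product identities hold in A_N for degree-one monomial quasisymmetric functions in superspace: (i) M_{(a)}·M_{(b)} = M_{(a+b)} + M_{(a,b)} + M_{(b,a)}; (ii) for a ≥ 0 and b ≥ 1, M_{(ȧ)}·M_{(b)} = M_{((a+b)˙)} + M_{(ȧ,b)} + M_{(b,ȧ)}; (iii) for a ≥ 1 and b ≥ 0, M_{(a)}·M_{(ḃ)} = M_{((a+b)˙)} + M_{(a,ḃ)} + M_{(ḃ,a)}; here a dot over an entry marks a dotted part. -/
import Mathlib


open TensorProduct

set_option synthInstance.maxHeartbeats 1000000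
set_option maxHeartbeats 1000000

noncomputable section

/-- The ring of polynomials in superspace in `N` variables. -/
abbrev SuperAlg (N : ℕ) : Type :=
  MvPolynomial (Fin N) ℚ ⊗[ℚ] ExteriorAlgebra ℚ (Fin N → ℚ)

/-- The (bosonic) variable `x_i`. -/
def sx {N : ℕ} (i : Fin N) : SuperAlg N := MvPolynomial.X i ⊗ₜ[ℚ] 1

/-- The (fermionic) variable `θ_i`. -/
def sθ {N : ℕ} (i : Fin N) : SuperAlg N :=
  1 ⊗ₜ[ℚ] ExteriorAlgebra.ι ℚ (Pi.single i 1)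

/-- A dotted composition is a list of parts `(a, η)` where `η = true` marks a dotted part,
and undotted parts must be positive. -/
def IsDottedComp (α : List (ℕ × Bool)) : Prop :=
  ∀ p ∈ α, p.2 = false → 1 ≤ p.1

/-- The monomial quasisymmetric function in superspace `M_α(B)` on the alphabet `B`:
the sum over `i_1 < ⋯ < i_ℓ` in `B` of `θ_{i_1}^{η_1} x_{i_1}^{a_1} ⋯ θ_{i_ℓ}^{η_ℓ} x_{i_ℓ}^{a_ℓ}`
(each strictly increasing tuple being encoded as a subset of `B` of size `ℓ`,
listed in increasing order). -/
def Mqs {N : ℕ} (α : List (ℕ × Bool)) (B : Finset (Fin N)) : SuperAlg N :=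
  ∑ S ∈ B.powersetCard α.length,
    (List.zipWith (fun i p => (if p.2 then sθ i else 1) * sx i ^ p.1)
      (S.sort (· ≤ ·)) α).prod

lemma sx_comm {N : ℕ} (i : Fin N) (z : SuperAlg N) : Commute (sx i) z := by
  unfold Commute SemiconjBy
  induction z using TensorProduct.induction_on with
  | zero => simp
  | tmul p m =>
      simp [sx, Algebra.TensorProduct.tmul_mul_tmul, mul_comm]
  | add x y hx hy => rw [mul_add, add_mul, hx, hy]

lemma sort_pair' {N : ℕ} {i j : Fin N} (h : i < j) :
    ({i, j} : Finset (Fin N)).sort (· ≤ ·) = [i, j] := by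
  rw [Finset.sort_insert]
  · simp
  · intro b hb; simp at hb; subst hb; exact h.le
  · simp [h.ne]

lemma Mqs_one {N : ℕ} (p : ℕ × Bool) (B : Finset (Fin N)) :
    Mqs [p] B = ∑ i ∈ B, (if p.2 then sθ i else 1) * sx i ^ p.1 := by
  rw [Mqs]
  simp [Finset.powersetCard_one, Finset.sum_map]

def ltPairs (N : ℕ) : Finset (Fin N × Fin N) :=
  Finset.univ.filter (fun ij => ij.1 < ij.2)

lemma Mqs_two {N : ℕ} (p q : ℕ × Bool) :
    Mqs [p, q] (Finset.univ : Finset (Fin N)) =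
      ∑ ij ∈ ltPairs N,
        ((if p.2 then sθ ij.1 else 1) * sx ij.1 ^ p.1) *
        ((if q.2 then sθ ij.2 else 1) * sx ij.2 ^ q.1) := by
  rw [Mqs]
  refine (Finset.sum_bij (fun ij _ => ({ij.1, ij.2} : Finset (Fin N))) ?_ ?_ ?_ ?_).symm
  · rintro ⟨i, j⟩ hij
    simp only [ltPairs, Finset.mem_filter] at hij
    simp [Finset.mem_powersetCard, Finset.card_pair hij.2.ne]
  · rintro ⟨i, j⟩ hij ⟨i', j'⟩ hij' h
    simp only [ltPairs, Finset.mem_filter] at hij hij'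
    have := congrArg (fun S : Finset (Fin N) => S.sort (· ≤ ·)) h
    simp only [sort_pair' hij.2, sort_pair' hij'.2, List.cons.injEq] at this
    simp [Prod.ext_iff, this.1, this.2.1]
  · intro S hS
    simp only [Finset.mem_powersetCard] at hS
    obtain ⟨x, y, hne, rfl⟩ := Finset.card_eq_two.1 hS.2
    rcases hne.lt_or_gt with h | h
    · exact ⟨(x, y), by simp [ltPairs, h], rfl⟩
    · exact ⟨(y, x), by simp [ltPairs, h], by rw [Finset.pair_comm]⟩
  · rintro ⟨i, j⟩ hij
    simp only [ltPairs, Finset.mem_filter] at hij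
    simp [sort_pair' hij.2]

lemma key {N : ℕ} (f g h : Fin N → SuperAlg N)
    (hc : ∀ i j : Fin N, i ≠ j → f i * g j = g j * f i)
    (hd : ∀ i, f i * g i = h i) :
    (∑ i, f i) * (∑ j, g j) =
      (∑ i, h i) + (∑ ij ∈ ltPairs N, f ij.1 * g ij.2)
        + (∑ ij ∈ ltPairs N, g ij.1 * f ij.2) := by
  have hmul : (∑ i, f i) * (∑ j, g j) = ∑ ij : Fin N × Fin N, f ij.1 * g ij.2 := by
    rw [Finset.sum_mul_sum, ← Finset.univ_product_univ, Finset.sum_product]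
  rw [hmul]
  have h1 : ∑ ij : Fin N × Fin N, f ij.1 * g ij.2
      = (∑ ij ∈ Finset.univ.filter (fun ij : Fin N × Fin N => ij.1 = ij.2), f ij.1 * g ij.2)
      + ∑ ij ∈ Finset.univ.filter (fun ij : Fin N × Fin N => ¬ ij.1 = ij.2), f ij.1 * g ij.2 :=
    (Finset.sum_filter_add_sum_filter_not _ _ _).symm
  have hdiag : (∑ ij ∈ Finset.univ.filter (fun ij : Fin N × Fin N => ij.1 = ij.2),
      f ij.1 * g ij.2) = ∑ i, h i := by
    refine Finset.sum_nbij' (fun ij => ij.1) (fun i => (i, i)) ?_ ?_ ?_ ?_ ?_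
    · intro a _; exact Finset.mem_univ _
    · intro a _; simp
    · rintro ⟨i, j⟩ hij; simp at hij; simp [hij]
    · intro i _; rfl
    · rintro ⟨i, j⟩ hij; simp at hij; subst hij; exact hd i
  have hsplit : Finset.univ.filter (fun ij : Fin N × Fin N => ¬ ij.1 = ij.2)
      = ltPairs N ∪ Finset.univ.filter (fun ij : Fin N × Fin N => ij.2 < ij.1) := by
    ext ⟨i, j⟩
    simp only [ltPairs, Finset.mem_filter, Finset.mem_union, Finset.mem_univ, true_and]
    constructor
    · exact fun hne => lt_or_gt_of_ne hne
    · rintro (h | h) <;> [exact h.ne; exact h.ne']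
  have hdisj : Disjoint (ltPairs N)
      (Finset.univ.filter (fun ij : Fin N × Fin N => ij.2 < ij.1)) := by
    rw [Finset.disjoint_left]
    rintro ⟨i, j⟩ h1' h2'
    simp only [ltPairs, Finset.mem_filter] at h1' h2'
    exact absurd h1'.2 (not_lt.2 h2'.2.le)
  have hswap : (∑ ij ∈ Finset.univ.filter (fun ij : Fin N × Fin N => ij.2 < ij.1),
      f ij.1 * g ij.2) = ∑ ij ∈ ltPairs N, g ij.1 * f ij.2 := by
    refine Finset.sum_nbij' (fun ij => (ij.2, ij.1)) (fun ij => (ij.2, ij.1)) ?_ ?_ ?_ ?_ ?_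
    · rintro ⟨i, j⟩ hij; simp only [Finset.mem_filter] at hij
      simp [ltPairs, hij.2]
    · rintro ⟨i, j⟩ hij; simp only [ltPairs, Finset.mem_filter] at hij
      simp [hij.2]
    · intro a _; rfl
    · intro a _; rfl
    · rintro ⟨i, j⟩ hij; simp only [Finset.mem_filter] at hij
      exact hc i j hij.2.ne'
  rw [h1, hdiag, hsplit, Finset.sum_union hdisj, hswap, add_assoc]

theorem Mqs_degree_one_products (N : ℕ) :
    (∀ a b : ℕ, 1 ≤ a → 1 ≤ b →
      Mqs [(a, false)] (Finset.univ : Finset (Fin N)) * Mqs [(b, false)] Finset.univ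
        = Mqs [(a + b, false)] Finset.univ
          + Mqs [(a, false), (b, false)] Finset.univ
          + Mqs [(b, false), (a, false)] Finset.univ) ∧
    (∀ a b : ℕ, 1 ≤ b →
      Mqs [(a, true)] (Finset.univ : Finset (Fin N)) * Mqs [(b, false)] Finset.univ
        = Mqs [(a + b, true)] Finset.univ
          + Mqs [(a, true), (b, false)] Finset.univ
          + Mqs [(b, false), (a, true)] Finset.univ) ∧
    (∀ a b : ℕ, 1 ≤ a →
      Mqs [(a, false)] (Finset.univ : Finset (Fin N)) * Mqs [(b, true)] Finset.univ
        = Mqs [(a + b, true)] Finset.univ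
          + Mqs [(a, false), (b, true)] Finset.univ
          + Mqs [(b, true), (a, false)] Finset.univ) := by
  refine ⟨?_, ?_, ?_⟩
  · intro a b _ _
    rw [Mqs_one, Mqs_one, Mqs_one, Mqs_two, Mqs_two]
    simp only [if_neg Bool.false_ne_true, Bool.false_eq_true, if_false, one_mul]
    exact key (fun i => sx i ^ a) (fun j => sx j ^ b) (fun i => sx i ^ (a + b))
      (fun i j _ => ((sx_comm i (sx j ^ b)).pow_left a).eq)
      (fun i => (pow_add _ _ _).symm)
  · intro a b _
    rw [Mqs_one, Mqs_one, Mqs_one, Mqs_two, Mqs_two]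
    simp only [if_pos, if_neg Bool.false_ne_true, Bool.false_eq_true, if_false, if_true, one_mul]
    exact key (fun i => sθ i * sx i ^ a) (fun j => sx j ^ b)
      (fun i => sθ i * sx i ^ (a + b))
      (fun i j _ => (((sx_comm j _).pow_left b).symm).eq)
      (fun i => by rw [mul_assoc, ← pow_add])
  · intro a b _
    rw [Mqs_one, Mqs_one, Mqs_one, Mqs_two, Mqs_two]
    simp only [if_pos, if_neg Bool.false_ne_true, Bool.false_eq_true, if_false, if_true, one_mul]
    exact key (fun i => sx i ^ a) (fun j => sθ j * sx j ^ b)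
      (fun i => sθ i * sx i ^ (a + b))
      (fun i j _ => ((sx_comm i _).pow_left a).eq)
      (fun i => by rw [← mul_assoc, ((sx_comm i (sθ i)).pow_left a).eq, mul_assoc, ← pow_add])

end
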